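/- arXiv:2008.06851 — 2 statements merged into one kernel-verified Lean document; each statement's English description precedes it below -/
import Mathlib

section
/- Let p, n be positive integers with 1 ≤ n < p, and κ ≥ 1 a real number. Let S be a symmetric p×p real matrix with spectral decomposition S = U · diag(λ̂₁,…,λ̂_p) · Uᵀ, where U is orthogonal, λ̂₁ ≥ ⋯ ≥ λ̂_n > 0 and λ̂_{n+1} = ⋯ = λ̂_p = 0. Then there exist integers α, β with 1 ≤ α < β ≤ n+1 such that, setting μ* := (κ·Σ_{i=1}^{α} λ̂ᵢ + Σ_{i=β}^{n} λ̂ᵢ) / (α·κ² + p − β + 1) and Λ* := diag(λ*₁,…,λ*_p) with λ*ᵢ = κ·μ* for 1 ≤ i ≤ α, λ*ᵢ = λ̂ᵢ for α < i < β, and λ*ᵢ = μ* for β ≤ i ≤ p, the matrix Σ̂ := U Λ* Uᵀ belongs to F(κ) and minimizes ‖Σ − S‖_F over all Σ ∈ F(κ). -/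
open Matrix

/-- The largest eigenvalue of a (symmetric) real matrix, as the supremum of its spectrum. -/
noncomputable def lamMax {p : ℕ} (A : Matrix (Fin p) (Fin p) ℝ) : ℝ := sSup (spectrum ℝ A)

/-- The smallest eigenvalue of a (symmetric) real matrix, as the infimum of its spectrum. -/
noncomputable def lamMin {p : ℕ} (A : Matrix (Fin p) (Fin p) ℝ) : ℝ := sInf (spectrum ℝ A)

/-- The Frobenius norm of a real matrix. -/
noncomputable def frobNorm {p : ℕ} (A : Matrix (Fin p) (Fin p) ℝ) : ℝ :=
  Real.sqrt (∑ i, ∑ j, (A i j) ^ 2)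

/-!
Conjugating by `U` turns the problem into approximating `diagonal λ̂` by `N = Uᵀ M U`. The diagonal
of `N` lies in `[s, κ s]` with `s = λ_min M`, and discarding the off-diagonal entries only
decreases the distance, so it suffices to approximate `λ̂` by vectors with entries in a band
`[s, κ s]`. The optimum clips `λ̂` to `[t, κ t]`, where `t > 0` is chosen (by the intermediate
value theorem) so that the first-order terms of the comparison with any other band cancel.
As `λ̂` is sorted, the entries clipped to `κ t` form a prefix and those clipped to `t` a suffix.
-/
section Clip

open Finset

variable {ι : Type*} [Fintype ι]

noncomputable def clip (κ t x : ℝ) : ℝ := max t (min x (κ * t))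

lemma clip_eq_ite {κ t : ℝ} (ht : t ≤ κ * t) (x : ℝ) :
    clip κ t x = if κ * t ≤ x then κ * t else if t ≤ x then x else t := by
  unfold clip
  split_ifs with h₁ h₂
  · rw [min_eq_right h₁, max_eq_right ht]
  · rw [min_eq_left (by linarith), max_eq_right h₂]
  · rw [min_eq_left (by linarith), max_eq_left (by linarith)]

lemma clip_mem_Icc {κ t : ℝ} (ht : t ≤ κ * t) (x : ℝ) : clip κ t x ∈ Set.Icc t (κ * t) :=
  ⟨le_max_left _ _, max_le ht (min_le_right _ _)⟩

/-- Half the derivative in `t` of `∑ i, (clip κ t (d i) - d i) ^ 2`. -/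
noncomputable def clipDefect (κ : ℝ) (d : ι → ℝ) (t : ℝ) : ℝ :=
  ∑ i, max (t - d i) 0 - κ * ∑ i, max (d i - κ * t) 0

lemma continuous_clipDefect (κ : ℝ) (d : ι → ℝ) : Continuous (clipDefect κ d) := by
  unfold clipDefect
  fun_prop

lemma clipDefect_eq (κ : ℝ) (d : ι → ℝ) (t : ℝ) :
    clipDefect κ d t = (#{i | d i < t} * t - ∑ i with d i < t, d i)
      - κ * (∑ i with κ * t ≤ d i, d i - #{i | κ * t ≤ d i} * (κ * t)) := by
  have lower : ∑ i, max (t - d i) 0 = ∑ i with d i < t, (t - d i) := by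
    rw [sum_filter]
    refine sum_congr rfl fun i _ => ?_
    split_ifs with h
    · exact max_eq_left (by linarith)
    · exact max_eq_right (by linarith)
  have upper : ∑ i, max (d i - κ * t) 0 = ∑ i with κ * t ≤ d i, (d i - κ * t) := by
    rw [sum_filter]
    refine sum_congr rfl fun i _ => ?_
    split_ifs with h
    · exact max_eq_left (by linarith)
    · exact max_eq_right (by linarith)
  rw [clipDefect, lower, upper, sum_sub_distrib, sum_sub_distrib, sum_const, sum_const,
    nsmul_eq_mul, nsmul_eq_mul]

lemma exists_pos_clipDefect_eq_zero {κ : ℝ} (hκ : 1 ≤ κ) {d : ι → ℝ} (hd : ∀ i, 0 ≤ d i)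
    {i₀ j₀ : ι} (hi₀ : 0 < d i₀) (hj₀ : d j₀ = 0) :
    ∃ t, 0 < t ∧ clipDefect κ d t = 0 := by
  set T := ∑ i, d i
  have hdT : ∀ i, d i ≤ T := fun i => single_le_sum (fun j _ => hd j) (mem_univ i)
  have hT : 0 < T := hi₀.trans_le (hdT i₀)
  have at_zero : clipDefect κ d 0 < 0 := by
    have lower : ∑ i, max (0 - d i) 0 = 0 :=
      sum_eq_zero fun i _ => max_eq_right (by linarith [hd i])
    have upper : ∑ i, max (d i - κ * 0) 0 = T :=
      sum_congr rfl fun i _ => by rw [mul_zero, sub_zero, max_eq_left (hd i)]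
    have h : clipDefect κ d 0 = -(κ * T) := by
      rw [clipDefect, lower, upper]
      ring
    rw [h]
    have : 0 < κ * T := mul_pos (by linarith) hT
    linarith
  have at_T : 0 < clipDefect κ d T := by
    have upper : ∑ i, max (d i - κ * T) 0 = 0 :=
      sum_eq_zero fun i _ => max_eq_right (by nlinarith [hdT i])
    have lower : T ≤ ∑ i, max (T - d i) 0 := by
      calc T = max (T - d j₀) 0 := by rw [hj₀, sub_zero, max_eq_left hT.le]
        _ ≤ ∑ i, max (T - d i) 0 :=
          single_le_sum (f := fun i => max (T - d i) 0) (fun i _ => le_max_right _ _) (mem_univ j₀)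
    rw [clipDefect, upper]
    linarith
  obtain ⟨t, ht, hzero⟩ := intermediate_value_Icc hT.le
    (continuous_clipDefect κ d).continuousOn ⟨at_zero.le, at_T.le⟩
  refine ⟨t, lt_of_le_of_ne ht.1 ?_, hzero⟩
  rintro rfl
  exact at_zero.ne hzero

lemma exists_le_apply_of_clipDefect_eq_zero {κ t : ℝ} {d : ι → ℝ} (hdef : clipDefect κ d t = 0)
    {j : ι} (hj : d j < t) : ∃ i, κ * t ≤ d i := by
  by_contra! h
  have upper : ∑ i, max (d i - κ * t) 0 = 0 :=
    sum_eq_zero fun i _ => max_eq_right (by linarith [h i])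
  have lower : t - d j ≤ ∑ i, max (t - d i) 0 :=
    (le_max_left _ 0).trans
      (single_le_sum (f := fun i => max (t - d i) 0) (fun i _ => le_max_right _ _) (mem_univ j))
  rw [clipDefect, upper] at hdef
  linarith

/-- Summed over the entries of `d`, the correction terms give `2 (s - t) * clipDefect κ d t`. -/
lemma sq_clip_sub_add_le {κ t s x y : ℝ} (ht : t ≤ κ * t) (hsx : s ≤ x) (hxs : x ≤ κ * s) :
    (clip κ t y - y) ^ 2 + 2 * (s - t) * (max (t - y) 0 - κ * max (y - κ * t) 0)
      ≤ (x - y) ^ 2 := by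
  rw [clip_eq_ite ht]
  split_ifs with h₁ h₂
  · rw [max_eq_right (by linarith), max_eq_left (by linarith)]
    nlinarith [sq_nonneg (x - κ * t), mul_nonneg (sub_nonneg.mpr h₁) (sub_nonneg.mpr hxs)]
  · rw [max_eq_right (by linarith), max_eq_right (by linarith)]
    nlinarith [sq_nonneg (x - y)]
  · rw [max_eq_left (by linarith), max_eq_right (by linarith)]
    nlinarith [sq_nonneg (x - t),
      mul_nonneg (sub_nonneg.mpr (not_le.mp h₂).le) (sub_nonneg.mpr hsx)]

lemma sum_sq_clip_sub_le {κ t : ℝ} (ht : t ≤ κ * t) {d : ι → ℝ} (hdef : clipDefect κ d t = 0)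
    {s : ℝ} {x : ι → ℝ} (hx : ∀ i, s ≤ x i ∧ x i ≤ κ * s) :
    ∑ i, (clip κ t (d i) - d i) ^ 2 ≤ ∑ i, (x i - d i) ^ 2 := by
  have h := sum_le_sum fun i (_ : i ∈ univ) => sq_clip_sub_add_le ht (hx i).1 (hx i).2 (y := d i)
  rwa [sum_add_distrib, ← mul_sum, sum_sub_distrib, ← mul_sum, ← clipDefect, hdef, mul_zero,
    add_zero] at h

end Clip

section Spectral

variable {n : Type*} [Fintype n] [DecidableEq n]

lemma spectrum_mul_mul_transpose {U : Matrix n n ℝ} (hU : Uᵀ * U = 1) (A : Matrix n n ℝ) :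
    spectrum ℝ (U * A * Uᵀ) = spectrum ℝ A := by
  simpa [star_eq_conjTranspose] using
    Unitary.spectrum_star_right_conjugate (R := ℝ) (a := A)
      (U := ⟨U, (mem_orthogonalGroup_iff' n ℝ).mpr hU⟩)

lemma le_diag_of_forall_le_spectrum {A : Matrix n n ℝ} (hA : A.IsHermitian) {r : ℝ}
    (h : ∀ x ∈ spectrum ℝ A, r ≤ x) (i : n) : r ≤ A i i := by
  open MatrixOrder in
  have hle := (algebraMap_le_iff_le_spectrum (a := A) hA.isSelfAdjoint).mpr h
  simpa [algebraMap_eq_diagonal, sub_nonneg] using (le_iff.mp hle).diag_nonneg (i := i)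

lemma diag_le_of_forall_spectrum_le {A : Matrix n n ℝ} (hA : A.IsHermitian) {r : ℝ}
    (h : ∀ x ∈ spectrum ℝ A, x ≤ r) (i : n) : A i i ≤ r := by
  open MatrixOrder in
  have hle := (le_algebraMap_iff_spectrum_le (a := A) hA.isSelfAdjoint).mpr h
  simpa [algebraMap_eq_diagonal, sub_nonneg] using (le_iff.mp hle).diag_nonneg (i := i)

end Spectral

lemma sum_sq_eq_trace_mul_transpose {m n : Type*} [Fintype m] [Fintype n] (A : Matrix m n ℝ) :
    ∑ i, ∑ j, A i j ^ 2 = (A * Aᵀ).trace := by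
  simp [trace, mul_apply, sq]

section Extremal

variable {p : ℕ}

lemma lamMin_le_diag {A : Matrix (Fin p) (Fin p) ℝ} (hA : A.IsHermitian) (i : Fin p) :
    lamMin A ≤ A i i :=
  le_diag_of_forall_le_spectrum hA (fun _ hx => csInf_le (finite_spectrum A).bddBelow hx) i

lemma diag_le_lamMax {A : Matrix (Fin p) (Fin p) ℝ} (hA : A.IsHermitian) (i : Fin p) :
    A i i ≤ lamMax A :=
  diag_le_of_forall_spectrum_le hA (fun _ hx => le_csSup (finite_spectrum A).bddAbove hx) i

lemma lamMax_le_mul_lamMin_of_spectrum {A : Matrix (Fin p) (Fin p) ℝ} {κ t : ℝ}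
    (hκ : 0 ≤ κ) (hne : (spectrum ℝ A).Nonempty) (h : spectrum ℝ A ⊆ Set.Icc t (κ * t)) :
    lamMax A ≤ κ * lamMin A :=
  calc lamMax A ≤ κ * t := csSup_le hne fun _ hx => (h hx).2
    _ ≤ κ * lamMin A := mul_le_mul_of_nonneg_left (le_csInf hne fun _ hx => (h hx).1) hκ

lemma frobNorm_mul_mul_transpose {U : Matrix (Fin p) (Fin p) ℝ} (hU : Uᵀ * U = 1)
    (A : Matrix (Fin p) (Fin p) ℝ) : frobNorm (U * A * Uᵀ) = frobNorm A := by
  unfold frobNorm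
  rw [sum_sq_eq_trace_mul_transpose, sum_sq_eq_trace_mul_transpose]
  congr 1
  calc (U * A * Uᵀ * (U * A * Uᵀ)ᵀ).trace = (U * (A * Aᵀ * Uᵀ)).trace := by
        simp only [transpose_mul, transpose_transpose, Matrix.mul_assoc, ← Matrix.mul_assoc Uᵀ U,
          hU, Matrix.one_mul]
    _ = (A * Aᵀ).trace := by
        rw [trace_mul_comm, Matrix.mul_assoc, hU, Matrix.mul_one]

lemma frobNorm_diagonal (d : Fin p → ℝ) : frobNorm (diagonal d) = √(∑ i, d i ^ 2) := by
  unfold frobNorm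
  congr 1
  refine Finset.sum_congr rfl fun i _ => ?_
  rw [Finset.sum_eq_single i (fun j _ hj => by simp [diagonal_apply_ne' _ hj]) (by simp),
    diagonal_apply_eq]

lemma sqrt_sum_sq_diag_le_frobNorm (A : Matrix (Fin p) (Fin p) ℝ) :
    √(∑ i, A i i ^ 2) ≤ frobNorm A :=
  Real.sqrt_le_sqrt <| Finset.sum_le_sum fun i _ =>
    Finset.single_le_sum (f := fun j => A i j ^ 2) (fun _ _ => sq_nonneg _) (Finset.mem_univ i)

end Extremal

section Optimality

variable {p : ℕ} {κ t : ℝ} {U : Matrix (Fin p) (Fin p) ℝ} {d : Fin p → ℝ}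

lemma posDef_clip_conj (hκ : 1 ≤ κ) (ht : 0 < t) (hU : Uᵀ * U = 1) :
    (U * diagonal (fun i => clip κ t (d i)) * Uᵀ).PosDef := by
  have hUt : IsUnit Uᵀ := ⟨⟨Uᵀ, U, hU, mul_eq_one_comm.mp hU⟩, rfl⟩
  have hD : (diagonal fun i => clip κ t (d i)).PosDef := posDef_diagonal_iff.mpr fun i =>
    ht.trans_le (clip_mem_Icc (le_mul_of_one_le_left ht.le hκ) (d i)).1
  simpa [star_eq_conjTranspose] using (IsUnit.posDef_star_left_conjugate_iff hUt).mpr hD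

lemma lamMax_clip_conj_le [NeZero p] (hκ : 1 ≤ κ) (ht : 0 ≤ t) (hU : Uᵀ * U = 1) :
    lamMax (U * diagonal (fun i => clip κ t (d i)) * Uᵀ)
      ≤ κ * lamMin (U * diagonal (fun i => clip κ t (d i)) * Uᵀ) := by
  have hspec := spectrum_mul_mul_transpose hU (diagonal fun i => clip κ t (d i))
  rw [spectrum_diagonal] at hspec
  refine lamMax_le_mul_lamMin_of_spectrum (t := t) (by linarith) (hspec ▸ Set.range_nonempty _) ?_
  rw [hspec]
  rintro _ ⟨i, rfl⟩
  exact clip_mem_Icc (le_mul_of_one_le_left ht hκ) (d i)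

lemma frobNorm_clip_conj_sub_le (hκ : 1 ≤ κ) (ht : 0 ≤ t) (hU : Uᵀ * U = 1)
    (hdef : clipDefect κ d t = 0) {M : Matrix (Fin p) (Fin p) ℝ} (hM : M.IsHermitian)
    (hMκ : lamMax M ≤ κ * lamMin M) :
    frobNorm (U * diagonal (fun i => clip κ t (d i)) * Uᵀ - U * diagonal d * Uᵀ)
      ≤ frobNorm (M - U * diagonal d * Uᵀ) := by
  set N := Uᵀ * M * U
  have hN : N.IsHermitian := by
    simpa [N] using isHermitian_conjTranspose_mul_mul U hM
  have hspec : spectrum ℝ N = spectrum ℝ M := by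
    simpa using spectrum_mul_mul_transpose (U := Uᵀ) (by simpa using mul_eq_one_comm.mp hU) M
  have hNdiag : ∀ i, lamMin M ≤ N i i ∧ N i i ≤ κ * lamMin M := fun i =>
    ⟨by simpa [lamMin, hspec] using lamMin_le_diag hN i,
      (show N i i ≤ lamMax M by simpa [lamMax, hspec] using diag_le_lamMax hN i).trans hMκ⟩
  have hM_eq : M - U * diagonal d * Uᵀ = U * (N - diagonal d) * Uᵀ := by
    have hUUt : U * Uᵀ = 1 := mul_eq_one_comm.mp hU
    simp only [N, Matrix.mul_sub, Matrix.sub_mul, ← Matrix.mul_assoc, hUUt, Matrix.one_mul,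
      Matrix.mul_assoc M, Matrix.mul_one]
  calc frobNorm (U * diagonal (fun i => clip κ t (d i)) * Uᵀ - U * diagonal d * Uᵀ)
      = √(∑ i, (clip κ t (d i) - d i) ^ 2) := by
        rw [← Matrix.sub_mul, ← Matrix.mul_sub, diagonal_sub, frobNorm_mul_mul_transpose hU,
          frobNorm_diagonal]
    _ ≤ √(∑ i, (N i i - d i) ^ 2) :=
        Real.sqrt_le_sqrt (sum_sq_clip_sub_le (le_mul_of_one_le_left ht hκ) hdef hNdiag)
    _ ≤ frobNorm (N - diagonal d) := by
        simpa using sqrt_sum_sq_diag_le_frobNorm (N - diagonal d)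
    _ = frobNorm (M - U * diagonal d * Uᵀ) := by
        rw [hM_eq, frobNorm_mul_mul_transpose hU]

end Optimality

section Threshold

open Finset

variable {p : ℕ}

lemma IsLowerSet.mem_iff_lt_card {s : Finset (Fin p)} (hs : IsLowerSet (s : Set (Fin p)))
    (i : Fin p) : i ∈ s ↔ (i : ℕ) < #s := by
  constructor
  · intro hi
    have h := card_le_card fun j (hj : j ∈ Iic i) => hs (mem_Iic.mp hj) hi
    rw [Fin.card_Iic] at h
    omega
  · intro hi
    by_contra hni
    have h := card_le_card fun j (hj : j ∈ s) =>
      mem_Iio.mpr (lt_of_not_ge fun hij => hni (hs hij hj))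
    rw [Fin.card_Iio] at h
    omega

lemma Antitone.le_apply_iff_lt_card {d : Fin p → ℝ} (hd : Antitone d) (c : ℝ) (i : Fin p) :
    c ≤ d i ↔ (i : ℕ) < #{j | c ≤ d j} := by
  have hs : IsLowerSet ((univ.filter fun j => c ≤ d j : Finset (Fin p)) : Set (Fin p)) :=
    fun a b hba ha => by simpa using (by simpa using ha : c ≤ d a).trans (hd hba)
  simpa using hs.mem_iff_lt_card i

lemma threshold_formula_eq_of_clipDefect_eq_zero {n : ℕ} {κ t : ℝ} (hκ : 1 ≤ κ) {d : Fin p → ℝ} (hd : Antitone d)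
    (hzero : ∀ i : Fin p, n ≤ (i : ℕ) → d i = 0) (hdef : clipDefect κ d t = 0) {α β : ℕ}
    (hα : α = #{i | κ * t ≤ d i}) (hα1 : 1 ≤ α) (hβ : β = #{i | t ≤ d i} + 1) :
    (κ * (∑ i ∈ univ.filter (fun i : Fin p => (i : ℕ) + 1 ≤ α), d i)
        + ∑ i ∈ univ.filter (fun i : Fin p => β ≤ (i : ℕ) + 1 ∧ (i : ℕ) + 1 ≤ n), d i) /
      ((α : ℝ) * κ ^ 2 + (p : ℝ) - (β : ℝ) + 1) = t := by
  have sum_upper : ∑ i ∈ univ.filter (fun i : Fin p => (i : ℕ) + 1 ≤ α), d i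
      = ∑ i with κ * t ≤ d i, d i := by
    congr 1
    refine filter_congr fun i _ => ?_
    rw [hd.le_apply_iff_lt_card, ← hα]
    omega
  have sum_lower : ∑ i ∈ univ.filter (fun i : Fin p => β ≤ (i : ℕ) + 1 ∧ (i : ℕ) + 1 ≤ n), d i
      = ∑ i with d i < t, d i := by
    rw [sum_filter, sum_filter]
    refine sum_congr rfl fun i _ => ?_
    have hi : β ≤ (i : ℕ) + 1 ↔ d i < t := by rw [← not_le, hd.le_apply_iff_lt_card, hβ]; omega
    by_cases hin : (i : ℕ) + 1 ≤ n
    · simp only [hi, hin, and_true]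
    · simp [hin, hzero i (by omega)]
  have card_lower : (α : ℝ) * κ ^ 2 + (p : ℝ) - (β : ℝ) + 1 = α * κ ^ 2 + #{i | d i < t} := by
    have h := card_filter_add_card_filter_not (s := univ) fun i => t ≤ d i
    simp only [not_le, card_univ, Fintype.card_fin] at h
    have h' : (#{i | t ≤ d i} : ℝ) + #{i | d i < t} = p := by exact_mod_cast h
    rw [hβ]
    push_cast
    linarith
  have hden : 0 < (α : ℝ) * κ ^ 2 + #{i | d i < t} := by
    have : (1 : ℝ) ≤ α := by exact_mod_cast hα1
    positivity
  rw [sum_upper, sum_lower, card_lower, div_eq_iff hden.ne']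
  rw [clipDefect_eq, ← hα] at hdef
  linear_combination -hdef

lemma Antitone.clip_apply_eq_ite {κ t : ℝ} (ht : t ≤ κ * t) {d : Fin p → ℝ} (hd : Antitone d)
    (i : Fin p) :
    clip κ t (d i) = if (i : ℕ) + 1 ≤ #{j | κ * t ≤ d j} then κ * t
      else if (i : ℕ) + 1 < #{j | t ≤ d j} + 1 then d i else t := by
  have h₁ : (i : ℕ) + 1 ≤ #{j | κ * t ≤ d j} ↔ κ * t ≤ d i := by
    rw [hd.le_apply_iff_lt_card]; omega
  have h₂ : (i : ℕ) + 1 < #{j | t ≤ d j} + 1 ↔ t ≤ d i := by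
    rw [hd.le_apply_iff_lt_card]; omega
  simp only [clip_eq_ite ht, h₁, h₂]

end Threshold

theorem stmt2_general {p n : ℕ} (hn : 1 ≤ n) (hnp : n < p) (κ : ℝ) (hκ : 1 ≤ κ)
    (S U : Matrix (Fin p) (Fin p) ℝ) (lamhat : Fin p → ℝ)
    (hU : Uᵀ * U = 1)
    (hS : S = U * Matrix.diagonal lamhat * Uᵀ)
    -- λ̂₁ ≥ ⋯ ≥ λ̂_n > 0 and λ̂_{n+1} = ⋯ = λ̂_p = 0 (0-indexed, so that `lamhat i` is λ̂_{i+1}):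
    (hanti : ∀ i j : Fin p, i ≤ j → lamhat j ≤ lamhat i)
    (hpos : ∀ i : Fin p, (i : ℕ) < n → 0 < lamhat i)
    (hzero : ∀ i : Fin p, n ≤ (i : ℕ) → lamhat i = 0) :
    ∃ α β : ℕ, 1 ≤ α ∧ α < β ∧ β ≤ n + 1 ∧
      ∀ (μstar : ℝ) (lamstar : Fin p → ℝ) (Sighat : Matrix (Fin p) (Fin p) ℝ),
        μstar = (κ * (∑ i ∈ Finset.univ.filter (fun i : Fin p => (i : ℕ) + 1 ≤ α), lamhat i)
            + ∑ i ∈ Finset.univ.filter (fun i : Fin p => β ≤ (i : ℕ) + 1 ∧ (i : ℕ) + 1 ≤ n),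
                lamhat i) /
          ((α : ℝ) * κ ^ 2 + (p : ℝ) - (β : ℝ) + 1) →
        lamstar = (fun i : Fin p =>
          if (i : ℕ) + 1 ≤ α then κ * μstar
          else if (i : ℕ) + 1 < β then lamhat i
          else μstar) →
        Sighat = U * Matrix.diagonal lamstar * Uᵀ →
        Sighat.PosDef ∧ lamMax Sighat ≤ κ * lamMin Sighat ∧
          ∀ M : Matrix (Fin p) (Fin p) ℝ, M.PosDef → lamMax M ≤ κ * lamMin M →
            frobNorm (Sighat - S) ≤ frobNorm (M - S) := by
  have : NeZero p := ⟨by omega⟩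
  have hd : Antitone lamhat := hanti
  have hnonneg : ∀ i, 0 ≤ lamhat i := fun i =>
    (lt_or_ge (i : ℕ) n).elim (fun h => (hpos i h).le) fun h => (hzero i h).ge
  have hlast : lamhat ⟨n, hnp⟩ = 0 := hzero _ le_rfl
  obtain ⟨t, ht, hdef⟩ := exists_pos_clipDefect_eq_zero hκ hnonneg
    (hpos ⟨0, by omega⟩ hn) hlast
  have htκ : t ≤ κ * t := le_mul_of_one_le_left ht.le hκ
  set α := (Finset.univ.filter fun i => κ * t ≤ lamhat i).card
  set β := (Finset.univ.filter fun i => t ≤ lamhat i).card + 1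
  have hα1 : 1 ≤ α := by
    obtain ⟨i, hi⟩ := exists_le_apply_of_clipDefect_eq_zero hdef (hlast ▸ ht)
    have := (hd.le_apply_iff_lt_card _ i).mp hi
    omega
  refine ⟨α, β, hα1, ?_, ?_, ?_⟩
  · exact Nat.lt_succ_of_le <| Finset.card_le_card <|
      Finset.monotone_filter_right _ fun _ _ h => htκ.trans h
  · by_contra! h
    have := (hd.le_apply_iff_lt_card t ⟨n, hnp⟩).mpr (by simp only; omega)
    linarith
  rintro μ lamstar Sighat hμ rfl rfl
  rw [threshold_formula_eq_of_clipDefect_eq_zero hκ hd hzero hdef rfl hα1 rfl] at hμ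
  have hclip : (fun i : Fin p => if (i : ℕ) + 1 ≤ α then κ * μ
      else if (i : ℕ) + 1 < β then lamhat i else μ) = fun i => clip κ t (lamhat i) :=
    funext fun i => by rw [hμ]; exact (hd.clip_apply_eq_ite htκ i).symm
  rw [hclip, hS]
  exact ⟨posDef_clip_conj hκ ht hU, lamMax_clip_conj_le hκ ht.le hU,
    fun M hM hMκ => frobNorm_clip_conj_sub_le hκ ht.le hU hdef hM.1 hMκ⟩

theorem stmt2 {p n : ℕ} (hn : 1 ≤ n) (hnp : n < p) (κ : ℝ) (hκ : 1 ≤ κ)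
    (S U : Matrix (Fin p) (Fin p) ℝ) (lamhat : Fin p → ℝ)
    (hSsym : S.IsHermitian)
    (hU : Uᵀ * U = 1)
    (hS : S = U * Matrix.diagonal lamhat * Uᵀ)
    -- λ̂₁ ≥ ⋯ ≥ λ̂_n > 0 and λ̂_{n+1} = ⋯ = λ̂_p = 0 (0-indexed, so that `lamhat i` is λ̂_{i+1}):
    (hanti : ∀ i j : Fin p, i ≤ j → lamhat j ≤ lamhat i)
    (hpos : ∀ i : Fin p, (i : ℕ) < n → 0 < lamhat i)
    (hzero : ∀ i : Fin p, n ≤ (i : ℕ) → lamhat i = 0) :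
    ∃ α β : ℕ, 1 ≤ α ∧ α < β ∧ β ≤ n + 1 ∧
      ∀ (μstar : ℝ) (lamstar : Fin p → ℝ) (Sighat : Matrix (Fin p) (Fin p) ℝ),
        μstar = (κ * (∑ i ∈ Finset.univ.filter (fun i : Fin p => (i : ℕ) + 1 ≤ α), lamhat i)
            + ∑ i ∈ Finset.univ.filter (fun i : Fin p => β ≤ (i : ℕ) + 1 ∧ (i : ℕ) + 1 ≤ n),
                lamhat i) /
          ((α : ℝ) * κ ^ 2 + (p : ℝ) - (β : ℝ) + 1) →
        lamstar = (fun i : Fin p =>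
          if (i : ℕ) + 1 ≤ α then κ * μstar
          else if (i : ℕ) + 1 < β then lamhat i
          else μstar) →
        Sighat = U * Matrix.diagonal lamstar * Uᵀ →
        Sighat.PosDef ∧ lamMax Sighat ≤ κ * lamMin Sighat ∧
          ∀ M : Matrix (Fin p) (Fin p) ℝ, M.PosDef → lamMax M ≤ κ * lamMin M →
            frobNorm (Sighat - S) ≤ frobNorm (M - S) :=
  stmt2_general hn hnp κ hκ S U lamhat hU hS hanti hpos hzero
end

section
/- Fix a real κ ≥ 1 and reals λ̂₁ ≥ λ̂₂ ≥ ⋯ ≥ λ̂_p ≥ 0 (p a positive integer) with λ̂_p = 0. Then the function f(μ) := Σ_{i=1}^p g_{λ̂ᵢ}(μ) is strictly convex on (0, ∞) and continuously differentiable on (0, ∞). -/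
/-! For `μ ≥ 0` and `κ ≥ 1` one has `g_λ(μ) = ((μ - λ)⁺)² + ((λ - κμ)⁺)²`. Each summand is the
square of the positive part of an affine function, hence convex, and it is `C¹` on all of `ℝ`
because `t ↦ (t⁺)²` has derivative `2t⁺`. The summand with `λ̂_p = 0` is `μ²`, which makes the sum
strictly convex. -/

/-- `gfun κ λ̂ μ = (min (max μ λ̂) (κμ) − λ̂)²`. -/
noncomputable def gfun (κ lamh μ : ℝ) : ℝ := (min (max μ lamh) (κ * μ) - lamh) ^ 2

/-- `ffun κ p λ̂ μ = ∑_{i=1}^p gfun κ λ̂ᵢ μ` (1-based indexing of `λ̂`). -/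
noncomputable def ffun (κ : ℝ) (p : ℕ) (lamhat : ℕ → ℝ) (μ : ℝ) : ℝ :=
  ∑ i ∈ Finset.Icc 1 p, gfun κ (lamhat i) μ

open Set

theorem ConvexOn.fun_sum {𝕜 E β ι : Type*} [Semiring 𝕜] [PartialOrder 𝕜] [AddCommMonoid E]
    [AddCommMonoid β] [PartialOrder β] [IsOrderedAddMonoid β] [SMul 𝕜 E] [Module 𝕜 β]
    {s : Set E} (hs : Convex 𝕜 s) {t : Finset ι} {f : ι → E → β}
    (hf : ∀ i ∈ t, ConvexOn 𝕜 s (f i)) : ConvexOn 𝕜 s (fun x ↦ ∑ i ∈ t, f i x) := by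
  simpa only [Finset.sum_fn] using
    Finset.sum_induction f (ConvexOn 𝕜 s) (fun _ _ ↦ ConvexOn.add) (convexOn_const (0 : β) hs) hf

theorem ConvexOn.sq_max_zero {s : Set ℝ} {f : ℝ → ℝ} (hf : ConvexOn ℝ s f) :
    ConvexOn ℝ s (fun x ↦ max (f x) 0 ^ 2) :=
  (hf.sup (convexOn_const 0 hf.1)).pow (fun _ _ ↦ le_sup_right) 2

theorem hasDerivAt_sq_max_zero (t : ℝ) :
    HasDerivAt (fun s : ℝ ↦ max s 0 ^ 2) (2 * max t 0) t := by
  rcases lt_trichotomy t 0 with ht | rfl | ht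
  · rw [max_eq_right ht.le, mul_zero]
    refine (hasDerivAt_const t (0 : ℝ)).congr_of_eventuallyEq ?_
    filter_upwards [Iio_mem_nhds ht] with s hs
    simp [max_eq_right hs.out.le]
  · have hleft : HasDerivWithinAt (fun s : ℝ ↦ max s 0 ^ 2) 0 (Iic 0) 0 :=
      (hasDerivWithinAt_const 0 _ (0 : ℝ)).congr
        (fun s hs ↦ by simp [max_eq_right (mem_Iic.1 hs)]) (by simp)
    have hright : HasDerivWithinAt (fun s : ℝ ↦ max s 0 ^ 2) 0 (Ici 0) 0 := by
      simpa using ((hasDerivAt_pow 2 (0 : ℝ)).hasDerivWithinAt (s := Ici 0)).congr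
        (fun s hs ↦ by simp [max_eq_left (mem_Ici.1 hs)]) (by simp)
    simpa [Iic_union_Ici] using hleft.union hright
  · rw [max_eq_left ht.le]
    refine ((hasDerivAt_pow 2 t).congr_of_eventuallyEq ?_).congr_deriv (by ring)
    filter_upwards [Ioi_mem_nhds ht] with s hs
    simp [max_eq_left hs.out.le]

theorem HasDerivAt.sq_max_zero {f : ℝ → ℝ} {f' x : ℝ} (hf : HasDerivAt f f' x) :
    HasDerivAt (fun y ↦ max (f y) 0 ^ 2) (2 * max (f x) 0 * f') x :=
  (hasDerivAt_sq_max_zero (f x)).comp x hf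

section gfun

variable {κ : ℝ}

theorem gfun_eq_sq_max_add_sq_max (hκ : 1 ≤ κ) (a : ℝ) {μ : ℝ} (hμ : 0 ≤ μ) :
    gfun κ a μ = max (μ - a) 0 ^ 2 + max (a - κ * μ) 0 ^ 2 := by
  have hκμ : μ ≤ κ * μ := le_mul_of_one_le_left hμ hκ
  unfold gfun
  rcases le_total a μ with haμ | hμa
  · rw [max_eq_left haμ, min_eq_left hκμ, max_eq_left (sub_nonneg.2 haμ),
      max_eq_right (by linarith : a - κ * μ ≤ 0)]
    ring
  · rw [max_eq_right hμa, max_eq_right (sub_nonpos.2 hμa)]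
    rcases le_total a (κ * μ) with haκ | hκa
    · rw [min_eq_left haκ, max_eq_right (sub_nonpos.2 haκ)]
      ring
    · rw [min_eq_right hκa, max_eq_left (sub_nonneg.2 hκa)]
      ring

theorem convexOn_gfun (hκ : 1 ≤ κ) (a : ℝ) : ConvexOn ℝ (Ici 0) (gfun κ a) := by
  have hlin₁ : ConvexOn ℝ (Ici 0) (fun μ : ℝ ↦ μ - a) :=
    (convexOn_id (convex_Ici 0)).add_const (-a) |>.congr fun μ _ ↦ by simp [sub_eq_add_neg]
  have hlin₂ : ConvexOn ℝ (Ici 0) (fun μ : ℝ ↦ a - κ * μ) :=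
    (LinearMap.convexOn (-κ • LinearMap.id) (convex_Ici 0)).add_const a |>.congr
      fun μ _ ↦ by simp [sub_eq_neg_add]
  exact (hlin₁.sq_max_zero.add hlin₂.sq_max_zero).congr fun μ hμ ↦
    (gfun_eq_sq_max_add_sq_max hκ a hμ).symm

theorem strictConvexOn_gfun_zero (hκ : 1 ≤ κ) : StrictConvexOn ℝ (Ioi 0) (gfun κ 0) := by
  refine ((Even.strictConvexOn_pow even_two two_ne_zero).subset (subset_univ _)
    (convex_Ioi 0)).congr fun μ hμ ↦ ?_
  simp [gfun_eq_sq_max_add_sq_max hκ 0 hμ.out.le, max_eq_left hμ.out.le,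
    mul_pos (zero_lt_one.trans_le hκ) hμ.out |>.le]

noncomputable def gfunDeriv (κ a μ : ℝ) : ℝ := 2 * max (μ - a) 0 - 2 * κ * max (a - κ * μ) 0

theorem continuous_gfunDeriv (κ a : ℝ) : Continuous (gfunDeriv κ a) := by
  unfold gfunDeriv
  fun_prop

theorem hasDerivAt_gfun (hκ : 1 ≤ κ) (a : ℝ) {μ : ℝ} (hμ : 0 < μ) :
    HasDerivAt (gfun κ a) (gfunDeriv κ a μ) μ := by
  have h₁ := ((hasDerivAt_id μ).sub_const a).sq_max_zero
  have h₂ := ((hasDerivAt_id μ).const_mul κ).const_sub a |>.sq_max_zero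
  refine ((h₁.add h₂).congr_of_eventuallyEq ?_).congr_deriv ?_
  · filter_upwards [Ioi_mem_nhds hμ] with ν hν
    exact gfun_eq_sq_max_add_sq_max hκ a hν.out.le
  · simp only [gfunDeriv, id_eq, mul_one, mul_neg]
    ring

end gfun

section ffun

variable {κ : ℝ} {p : ℕ} {lamhat : ℕ → ℝ}

theorem hasDerivAt_ffun (hκ : 1 ≤ κ) {μ : ℝ} (hμ : 0 < μ) :
    HasDerivAt (ffun κ p lamhat) (∑ i ∈ Finset.Icc 1 p, gfunDeriv κ (lamhat i) μ) μ :=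
  HasDerivAt.fun_sum fun i _ ↦ hasDerivAt_gfun hκ (lamhat i) hμ

theorem strictConvexOn_ffun (hκ : 1 ≤ κ) (hp : 0 < p) (hlast : lamhat p = 0) :
    StrictConvexOn ℝ (Ioi 0) (ffun κ p lamhat) := by
  have hsplit : ffun κ p lamhat =
      gfun κ 0 + fun μ ↦ ∑ i ∈ (Finset.Icc 1 p).erase p, gfun κ (lamhat i) μ := by
    ext μ
    rw [ffun, ← Finset.add_sum_erase _ _ (Finset.mem_Icc.2 ⟨hp, le_rfl⟩), hlast, Pi.add_apply]
  rw [hsplit]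
  exact (strictConvexOn_gfun_zero hκ).add_convexOn
    ((ConvexOn.fun_sum (convex_Ici 0) fun i _ ↦ convexOn_gfun hκ (lamhat i)).subset
      Ioi_subset_Ici_self (convex_Ioi 0))

end ffun

theorem stmt8_general (κ : ℝ) (hκ : 1 ≤ κ) (p : ℕ) (hp : 0 < p) (lamhat : ℕ → ℝ)
    -- λ̂_p = 0:
    (hlast : lamhat p = 0) :
    StrictConvexOn ℝ (Set.Ioi (0 : ℝ)) (ffun κ p lamhat) ∧
    (∀ μ : ℝ, 0 < μ → DifferentiableAt ℝ (ffun κ p lamhat) μ) ∧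
    ContinuousOn (deriv (ffun κ p lamhat)) (Set.Ioi (0 : ℝ)) := by
  refine ⟨strictConvexOn_ffun hκ hp hlast, fun μ hμ ↦ (hasDerivAt_ffun hκ hμ).differentiableAt, ?_⟩
  have hcont : Continuous fun μ ↦ ∑ i ∈ Finset.Icc 1 p, gfunDeriv κ (lamhat i) μ :=
    continuous_finsetSum _ fun i _ ↦ continuous_gfunDeriv κ (lamhat i)
  exact hcont.continuousOn.congr fun μ hμ ↦ (hasDerivAt_ffun hκ hμ).deriv

theorem stmt8 (κ : ℝ) (hκ : 1 ≤ κ) (p : ℕ) (hp : 0 < p) (lamhat : ℕ → ℝ)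
    -- λ̂₁ ≥ λ̂₂ ≥ ⋯ ≥ λ̂_p ≥ 0:
    (hanti : ∀ i j : ℕ, 1 ≤ i → i ≤ j → j ≤ p → lamhat j ≤ lamhat i)
    (hnonneg : ∀ i : ℕ, 1 ≤ i → i ≤ p → 0 ≤ lamhat i)
    -- λ̂_p = 0:
    (hlast : lamhat p = 0) :
    StrictConvexOn ℝ (Set.Ioi (0 : ℝ)) (ffun κ p lamhat) ∧
    (∀ μ : ℝ, 0 < μ → DifferentiableAt ℝ (ffun κ p lamhat) μ) ∧
    ContinuousOn (deriv (ffun κ p lamhat)) (Set.Ioi (0 : ℝ)) :=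
  stmt8_general κ hκ p hp lamhat hlast
end
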